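/- arXiv:1001.3049 — 3 statements merged into one kernel-verified Lean document; each statement's English description precedes it below -/
import Mathlib

section
/- Composition theorem: Let f : ℝ × L²(P,H) → L²(P,H) be jointly continuous, square-mean almost automorphic in t for each fixed x, and L-Lipschitz in the sense E‖f(t,x) − f(t,y)‖² ≤ L·E‖x−y‖² for all x, y and all t (L > 0 independent of t). Then for every square-mean almost automorphic process x : ℝ → L²(P,H), the process F(t) := f(t, x(t)) is square-mean almost automorphic. -/
open Filter MeasureTheory Set Real

/-- The codomain `E` models the Hilbert space `L²(P, H)` of square-integrable
`H`-valued random variables, so that `‖·‖ ^ 2` models the second moment `E‖·‖²`.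
A process `x : ℝ → E` is square-mean almost automorphic if it is stochastically
continuous (i.e. continuous into `L²`) and every sequence of reals `s'` admits a
subsequence `s' ∘ φ` and a limiting process `y` with
`E‖x(t+sₙ) − y(t)‖² → 0` and `E‖y(t−sₙ) − x(t)‖² → 0` for each `t`. -/
def SqMeanAA {E : Type*} [NormedAddCommGroup E] (x : ℝ → E) : Prop :=
  Continuous x ∧
  ∀ s' : ℕ → ℝ, ∃ φ : ℕ → ℕ, StrictMono φ ∧ ∃ y : ℝ → E,
    (∀ t : ℝ, Tendsto (fun n => ‖x (t + s' (φ n)) - y t‖ ^ 2) atTop (nhds 0)) ∧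
    (∀ t : ℝ, Tendsto (fun n => ‖y (t - s' (φ n)) - x t‖ ^ 2) atTop (nhds 0))

/-
The limit `f̃` of the translates `f(· + sₙ, ·)` inherits the Lipschitz bound, so both families
`f(t + sₙ, ·)` and `f̃(t − sₙ, ·)` are uniformly Lipschitz. For such a family `gₙ`, convergence of
`gₙ(b)` together with `aₙ → b` gives convergence of `gₙ(aₙ)` to the same limit. Extracting first a
subsequence for `x` and then a further one for `f` along it, this applies to
`f(t + sₙ, x(t + sₙ)) → f̃(t, y(t))` and to `f̃(t − sₙ, y(t − sₙ)) → f(t, x(t))`.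
-/

open scoped NNReal Topology

theorem tendsto_norm_sub_sq_zero_iff {ι E : Type*} [SeminormedAddCommGroup E] {l : Filter ι}
    {u : ι → E} {v : E} :
    Tendsto (fun i => ‖u i - v‖ ^ 2) l (𝓝 0) ↔ Tendsto u l (𝓝 v) := by
  rw [tendsto_iff_norm_sub_tendsto_zero (f := u)]
  refine ⟨fun h => ?_, fun h => by simpa using h.pow 2⟩
  simpa [Function.comp_def, Real.sqrt_sq (norm_nonneg _)] using
    (Real.continuous_sqrt.tendsto 0).comp h

theorem lipschitzWith_sqrt_of_norm_sub_sq_le {E F : Type*} [SeminormedAddCommGroup E]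
    [SeminormedAddCommGroup F] {g : E → F} {L : ℝ}
    (h : ∀ u v, ‖g u - g v‖ ^ 2 ≤ L * ‖u - v‖ ^ 2) :
    LipschitzWith (Real.toNNReal √L) g := by
  refine LipschitzWith.of_dist_le_mul fun u v => ?_
  rw [dist_eq_norm, dist_eq_norm, Real.coe_toNNReal _ (Real.sqrt_nonneg L)]
  calc ‖g u - g v‖ = √(‖g u - g v‖ ^ 2) := (Real.sqrt_sq (norm_nonneg _)).symm
    _ ≤ √(L * ‖u - v‖ ^ 2) := Real.sqrt_le_sqrt (h u v)
    _ = √L * ‖u - v‖ := by rw [Real.sqrt_mul' _ (sq_nonneg _), Real.sqrt_sq (norm_nonneg _)]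

theorem LipschitzWith.of_tendsto {ι α β : Type*} [PseudoEMetricSpace α] [PseudoEMetricSpace β]
    {l : Filter ι} [l.NeBot] {g : ι → α → β} {h : α → β} {K : ℝ≥0}
    (hg : ∀ i, LipschitzWith K (g i)) (hlim : ∀ a, Tendsto (fun i => g i a) l (𝓝 (h a))) :
    LipschitzWith K h :=
  (isClosed_setOfPred_lipschitzWith K).mem_of_tendsto (tendsto_pi_nhds.mpr hlim)
    (Eventually.of_forall hg)

theorem Filter.Tendsto.apply_of_lipschitzWith {ι α β : Type*} [PseudoMetricSpace α]
    [PseudoMetricSpace β] {l : Filter ι} {g : ι → α → β} {K : ℝ≥0}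
    (hg : ∀ i, LipschitzWith K (g i)) {a : ι → α} {b : α} {c : β}
    (ha : Tendsto a l (𝓝 b)) (hgb : Tendsto (fun i => g i b) l (𝓝 c)) :
    Tendsto (fun i => g i (a i)) l (𝓝 c) := by
  rw [tendsto_iff_dist_tendsto_zero] at ha hgb ⊢
  refine squeeze_zero (fun _ => dist_nonneg) (fun i => ?_)
    (by simpa using (ha.const_mul (K : ℝ)).add hgb)
  calc dist (g i (a i)) c ≤ dist (g i (a i)) (g i b) + dist (g i b) c := dist_triangle _ _ _
    _ ≤ K * dist (a i) b + dist (g i b) c := by gcongr; exact (hg i).dist_le_mul _ _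

theorem sqMeanAA_comp_general {E : Type*} [NormedAddCommGroup E]
    (f : ℝ → E → E)
    (hjc : Continuous fun p : ℝ × E => f p.1 p.2)
    (hfAA : ∀ s' : ℕ → ℝ, ∃ φ : ℕ → ℕ, StrictMono φ ∧ ∃ ftil : ℝ → E → E,
      (∀ (t : ℝ) (u : E),
        Tendsto (fun n => ‖f (t + s' (φ n)) u - ftil t u‖ ^ 2) atTop (nhds 0)) ∧
      (∀ (t : ℝ) (u : E),
        Tendsto (fun n => ‖ftil (t - s' (φ n)) u - f t u‖ ^ 2) atTop (nhds 0)))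
    (L : ℝ)
    (hLip : ∀ (t : ℝ) (u v : E), ‖f t u - f t v‖ ^ 2 ≤ L * ‖u - v‖ ^ 2)
    {x : ℝ → E} (hx : SqMeanAA x) :
    SqMeanAA (fun t => f t (x t)) := by
  obtain ⟨hxc, hxAA⟩ := hx
  have hf_lip : ∀ t, LipschitzWith (Real.toNNReal √L) (f t) :=
    fun t => lipschitzWith_sqrt_of_norm_sub_sq_le (hLip t)
  refine ⟨hjc.comp (continuous_id.prodMk hxc), fun s' => ?_⟩
  obtain ⟨φ₁, hφ₁, y, hy₁, hy₂⟩ := hxAA s'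
  obtain ⟨φ₂, hφ₂, ftil, hf₁, hf₂⟩ := hfAA (s' ∘ φ₁)
  simp only [tendsto_norm_sub_sq_zero_iff, Function.comp_apply] at hy₁ hy₂ hf₁ hf₂
  have hftil_lip : ∀ t, LipschitzWith (Real.toNNReal √L) (ftil t) :=
    fun t => LipschitzWith.of_tendsto (fun _ => hf_lip _) (hf₁ t)
  refine ⟨φ₁ ∘ φ₂, hφ₁.comp hφ₂, fun t => ftil t (y t), fun t => ?_, fun t => ?_⟩
  all_goals simp only [tendsto_norm_sub_sq_zero_iff, Function.comp_apply]
  · exact ((hy₁ t).comp hφ₂.tendsto_atTop).apply_of_lipschitzWith (fun _ => hf_lip _) (hf₁ t (y t))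
  · exact ((hy₂ t).comp hφ₂.tendsto_atTop).apply_of_lipschitzWith (fun _ => hftil_lip _)
      (hf₂ t (x t))

/-- Composition theorem: if `f(t, x)` is jointly continuous, square-mean almost
automorphic in `t` for each fixed `x`, and uniformly `L`-Lipschitz in square
mean, then for any square-mean almost automorphic process `x` the process
`F(t) = f(t, x(t))` is square-mean almost automorphic. -/
theorem sqMeanAA_comp {E : Type*} [NormedAddCommGroup E]
    (f : ℝ → E → E)
    (hjc : Continuous fun p : ℝ × E => f p.1 p.2)
    (hfAA : ∀ s' : ℕ → ℝ, ∃ φ : ℕ → ℕ, StrictMono φ ∧ ∃ ftil : ℝ → E → E,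
      (∀ (t : ℝ) (u : E),
        Tendsto (fun n => ‖f (t + s' (φ n)) u - ftil t u‖ ^ 2) atTop (nhds 0)) ∧
      (∀ (t : ℝ) (u : E),
        Tendsto (fun n => ‖ftil (t - s' (φ n)) u - f t u‖ ^ 2) atTop (nhds 0)))
    (L : ℝ) (hL : 0 < L)
    (hLip : ∀ (t : ℝ) (u v : E), ‖f t u - f t v‖ ^ 2 ≤ L * ‖u - v‖ ^ 2)
    {x : ℝ → E} (hx : SqMeanAA x) :
    SqMeanAA (fun t => f t (x t)) :=
  sqMeanAA_comp_general f hjc hfAA L hLip hx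
end

section
/- Uniqueness via decay and almost automorphy: Let z : ℝ → L²(P,H) be square-mean almost automorphic and suppose that for some a ∈ ℝ and constants K, ω > 0, ‖z(t)‖ ≤ K e^{−ω(t−a)} ‖z(a)‖ for all t ≥ a (so z(t) → 0 as t → +∞ in L²). Then z(t) = 0 for all t ∈ ℝ. -/
/- Decay forces `z(t + n) → 0`, so the limit process `z̃` provided by almost automorphy along
`sₙ = n` is identically zero; the return limit `z̃(t - sₙ) → z(t)` then gives `z(t) = 0`. -/

open Filter MeasureTheory Set Real

open Topology

theorem tendsto_of_norm_sub_sq_tendsto_zero {ι E : Type*} [SeminormedAddCommGroup E]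
    {l : Filter ι} {f : ι → E} {c : E} (h : Tendsto (fun n => ‖f n - c‖ ^ 2) l (𝓝 0)) :
    Tendsto f l (𝓝 c) := by
  rw [tendsto_iff_norm_sub_tendsto_zero]
  simpa [Real.sqrt_sq (norm_nonneg _)] using h.sqrt

theorem tendsto_zero_of_norm_le_exp_decay {E : Type*} [SeminormedAddCommGroup E] {z : ℝ → E}
    {a C ω : ℝ} (hω : 0 < ω) (hdecay : ∀ t, a ≤ t → ‖z t‖ ≤ C * Real.exp (-ω * (t - a))) :
    Tendsto z atTop (𝓝 0) := by
  have hexp : Tendsto (fun t => Real.exp (-ω * (t - a))) atTop (𝓝 0) :=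
    Real.tendsto_exp_atBot.comp <|
      (tendsto_atTop_add_const_right _ _ tendsto_id).const_mul_atTop_of_neg (neg_neg_of_pos hω)
  rw [tendsto_zero_iff_norm_tendsto_zero]
  refine squeeze_zero' (Eventually.of_forall fun t => norm_nonneg _) ?_
    (by simpa only [mul_zero] using hexp.const_mul C)
  filter_upwards [eventually_ge_atTop a] with t ht using hdecay t ht

theorem SqMeanAA.eq_zero_of_tendsto_atTop {E : Type*} [NormedAddCommGroup E] {x : ℝ → E}
    (hx : SqMeanAA x) (hlim : Tendsto x atTop (𝓝 0)) : x = 0 := by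
  obtain ⟨φ, hφ, y, hxy, hyx⟩ := hx.2 (fun n => (n : ℝ))
  have hy : y = 0 := funext fun t => by
    have hshift : Tendsto (fun n => t + (φ n : ℝ)) atTop atTop :=
      tendsto_atTop_add_const_left _ _ (tendsto_natCast_atTop_atTop.comp hφ.tendsto_atTop)
    exact tendsto_nhds_unique (tendsto_of_norm_sub_sq_tendsto_zero (hxy t)) (hlim.comp hshift)
  funext t
  have hconst := tendsto_of_norm_sub_sq_tendsto_zero (hyx t)
  simp only [hy, Pi.zero_apply] at hconst
  exact (tendsto_const_nhds_iff.mp hconst).symm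

theorem sqMeanAA_decay_eq_zero_general {E : Type*} [NormedAddCommGroup E]
    {z : ℝ → E} (hz : SqMeanAA z) (a K ω : ℝ) (hω : 0 < ω)
    (hdecay : ∀ t : ℝ, a ≤ t → ‖z t‖ ≤ K * Real.exp (-ω * (t - a)) * ‖z a‖) :
    ∀ t : ℝ, z t = 0 := by
  have hlim : Tendsto z atTop (𝓝 0) :=
    tendsto_zero_of_norm_le_exp_decay (C := K * ‖z a‖) hω fun t ht => by
      simpa only [mul_right_comm] using hdecay t ht
  exact congrFun (hz.eq_zero_of_tendsto_atTop hlim)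

/-- Uniqueness via decay and almost automorphy: a square-mean almost
automorphic process `z` satisfying the exponential decay
`‖z(t)‖₂ ≤ K e^{−ω(t−a)} ‖z(a)‖₂` for all `t ≥ a` must vanish identically. -/
theorem sqMeanAA_decay_eq_zero {E : Type*} [NormedAddCommGroup E]
    {z : ℝ → E} (hz : SqMeanAA z) (a K ω : ℝ) (hK : 0 < K) (hω : 0 < ω)
    (hdecay : ∀ t : ℝ, a ≤ t → ‖z t‖ ≤ K * Real.exp (-ω * (t - a)) * ‖z a‖) :
    ∀ t : ℝ, z t = 0 :=
  sqMeanAA_decay_eq_zero_general hz a K ω hω hdecay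
end

section
/- If a square-mean almost automorphic function f : ℝ → L²(P,H) and a decaying semigroup T (‖T(t)‖ ≤ Ke^{−ωt}) are given, then u(t) := ∫_{−∞}^t T(t−s) f(s) ds defines a square-mean almost automorphic process, and for any a ≤ t it satisfies u(t) = T(t−a)u(a) + ∫_a^t T(t−s) f(s) ds (cocycle/variation-of-constants identity). -/
/-!
Translating the variable of integration turns `u(t + τ)` into the same convolution of
`f(· + τ)`, evaluated at `t`. As `f` is bounded (by almost automorphy) and
`‖T(t-s)‖ ≤ K e^{-ω(t-s)}` is integrable on `(-∞, t]`, dominated convergence passes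
pointwise limits of translates of `f` through the convolution: as `τ → 0` this gives
continuity of `u`, and along the subsequence given by almost automorphy of `f` it gives
the limit process of `u`. The identity follows by splitting `(-∞, t] = (-∞, a] ∪ (a, t]`
and factoring `T(t-s) = T(t-a) T(a-s)` out of the integral over `(-∞, a]`.
-/

open Filter MeasureTheory Set Real

open Topology

section SquareMean

variable {ι E : Type*} [NormedAddCommGroup E]

lemma tendsto_iff_sq_norm_sub_tendsto_zero {l : Filter ι} {x : ι → E} {c : E} :
    Tendsto x l (𝓝 c) ↔ Tendsto (fun n => ‖x n - c‖ ^ 2) l (𝓝 0) := by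
  rw [tendsto_iff_norm_sub_tendsto_zero]
  refine ⟨fun h => by simpa using h.pow 2, fun h => ?_⟩
  simpa [Real.sqrt_sq (norm_nonneg _)] using h.sqrt

lemma SqMeanAA.exists_norm_le {f : ℝ → E} (hf : SqMeanAA f) :
    ∃ M, ∀ t, ‖f t‖ ≤ M := by
  by_contra! hunb
  choose s hs using fun n : ℕ => hunb n
  obtain ⟨φ, hφ, y, hconv, -⟩ := hf.2 s
  have hlim : Tendsto (fun n => f (s (φ n))) atTop (𝓝 (y 0)) := by
    simpa using tendsto_iff_sq_norm_sub_tendsto_zero.2 (hconv 0)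
  obtain ⟨C, hC⟩ := isBounded_iff_forall_norm_le.1 (Metric.isBounded_range_of_tendsto _ hlim)
  obtain ⟨n, hn⟩ := exists_nat_gt C
  have hφn : (n : ℝ) ≤ φ n := by exact_mod_cast hφ.le_apply
  linarith [hs (φ n), hC _ (mem_range_self n)]

end SquareMean

lemma integrableOn_exp_neg_mul_sub_Iic {ω : ℝ} (hω : 0 < ω) (t : ℝ) :
    IntegrableOn (fun s => Real.exp (-ω * (t - s))) (Iic t) := by
  refine IntegrableOn.congr_fun ((integrableOn_exp_mul_Iic hω t).const_mul (Real.exp (-ω * t)))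
    (fun s _ => ?_) measurableSet_Iic
  rw [← Real.exp_add]
  ring_nf

section Convolution

variable {E : Type*} [NormedAddCommGroup E] [NormedSpace ℝ E]

noncomputable def causalConv (T : ℝ → E →L[ℝ] E) (g : ℝ → E) (t : ℝ) : E :=
  ∫ s in Iic t, T (t - s) (g s)

variable (T : ℝ → E →L[ℝ] E)

lemma causalConv_add_right (g : ℝ → E) (t τ : ℝ) :
    causalConv T g (t + τ) = causalConv T (fun s => g (s + τ)) t := by
  have h := (measurePreserving_add_right volume τ).setIntegral_preimage_emb
    (measurableEmbedding_addRight τ) (fun s => T (t + τ - s) (g s)) (Iic (t + τ))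
  rw [preimage_add_const_Iic, add_sub_cancel_right] at h
  simp only [causalConv, ← h, add_sub_add_right_eq_sub]

/-- Dominated convergence, with dominating function `K e^{-ω(t-s)} M`. -/
lemma tendsto_causalConv {K ω M : ℝ} (hω : 0 < ω)
    (hTb : ∀ t : ℝ, 0 ≤ t → ‖T t‖ ≤ K * Real.exp (-ω * t))
    (hTc : Continuous fun p : ℝ × E => T p.1 p.2)
    {ι : Type*} {l : Filter ι} [l.IsCountablyGenerated] {F : ι → ℝ → E} {g : ℝ → E}
    (hF : ∀ i, StronglyMeasurable (F i)) (hFM : ∀ i s, ‖F i s‖ ≤ M)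
    (hlim : ∀ s, Tendsto (fun i => F i s) l (𝓝 (g s))) (t : ℝ) :
    Tendsto (fun i => causalConv T (F i) t) l (𝓝 (causalConv T g t)) := by
  refine tendsto_integral_filter_of_dominated_convergence
    (fun s => K * Real.exp (-ω * (t - s)) * M) (Eventually.of_forall fun i => ?_)
    (Eventually.of_forall fun i => ?_)
    ((integrableOn_exp_neg_mul_sub_Iic hω t).const_mul K |>.mul_const M)
    (Eventually.of_forall fun s => ((T (t - s)).continuous.tendsto _).comp (hlim s))
  · exact (hTc.comp_stronglyMeasurable
      ((continuous_const.sub continuous_id).stronglyMeasurable.prodMk (hF i))).aestronglyMeasurable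
  · filter_upwards [ae_restrict_mem measurableSet_Iic] with s hs
    have hTs := hTb _ (sub_nonneg.2 hs)
    calc ‖T (t - s) (F i s)‖ ≤ ‖T (t - s)‖ * ‖F i s‖ := (T (t - s)).le_opNorm _
      _ ≤ K * Real.exp (-ω * (t - s)) * M :=
        mul_le_mul hTs (hFM i s) (norm_nonneg _) ((norm_nonneg _).trans hTs)

lemma continuous_causalConv {K ω M : ℝ} (hω : 0 < ω)
    (hTb : ∀ t : ℝ, 0 ≤ t → ‖T t‖ ≤ K * Real.exp (-ω * t))
    (hTc : Continuous fun p : ℝ × E => T p.1 p.2)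
    {f : ℝ → E} (hf : Continuous f) (hfM : ∀ t, ‖f t‖ ≤ M) :
    Continuous (causalConv T f) := by
  refine continuous_iff_continuousAt.2 fun t => ?_
  have hshift : ∀ t', causalConv T f t' = causalConv T (fun s => f (s + (t' - t))) t :=
    fun t' => by rw [← causalConv_add_right, add_sub_cancel]
  have hlim : ∀ s, Tendsto (fun t' => f (s + (t' - t))) (𝓝 t) (𝓝 (f s)) := fun s =>
    (hf.tendsto s).comp <| by
      simpa using ((tendsto_id (x := 𝓝 t)).sub_const t).const_add s
  refine (tendsto_causalConv T hω hTb hTc (fun t' => ?_) (fun _ _ => hfM _) hlim t).congr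
    fun t' => (hshift t').symm
  exact (hf.comp (continuous_add_const _)).stronglyMeasurable

/-- The limit process along a subsequence is the convolution of the limit of `f`. -/
theorem sqMeanAA_causalConv {K ω : ℝ} (hω : 0 < ω)
    (hTb : ∀ t : ℝ, 0 ≤ t → ‖T t‖ ≤ K * Real.exp (-ω * t))
    (hTc : Continuous fun p : ℝ × E => T p.1 p.2)
    {f : ℝ → E} (hf : SqMeanAA f) : SqMeanAA (causalConv T f) := by
  obtain ⟨M, hM⟩ := hf.exists_norm_le
  refine ⟨continuous_causalConv T hω hTb hTc hf.1 hM, fun s' => ?_⟩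
  obtain ⟨φ, hφ, g, hfg, hgf⟩ := hf.2 s'
  have hfg' : ∀ t, Tendsto (fun n => f (t + s' (φ n))) atTop (𝓝 (g t)) :=
    fun t => tendsto_iff_sq_norm_sub_tendsto_zero.2 (hfg t)
  have hgf' : ∀ t, Tendsto (fun n => g (t + -s' (φ n))) atTop (𝓝 (f t)) :=
    fun t => tendsto_iff_sq_norm_sub_tendsto_zero.2 (by simpa only [sub_eq_add_neg] using hgf t)
  have hg : StronglyMeasurable g := stronglyMeasurable_of_tendsto atTop
    (fun n => (hf.1.comp (continuous_add_const _)).stronglyMeasurable) (tendsto_pi_nhds.2 hfg')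
  have hgM : ∀ t, ‖g t‖ ≤ M :=
    fun t => le_of_tendsto (hfg' t).norm (Eventually.of_forall fun _ => hM _)
  refine ⟨φ, hφ, causalConv T g, fun t => ?_, fun t => ?_⟩ <;>
    rw [← tendsto_iff_sq_norm_sub_tendsto_zero]
  · simp only [causalConv_add_right]
    exact tendsto_causalConv T hω hTb hTc
      (fun n => (hf.1.comp (continuous_add_const _)).stronglyMeasurable) (fun _ _ => hM _) hfg' t
  · simp only [sub_eq_add_neg, causalConv_add_right]
    exact tendsto_causalConv T hω hTb hTc
      (fun n => hg.comp_measurable (measurable_add_const _)) (fun _ _ => hgM _) hgf' t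

lemma causalConv_eq_add_integral_Ioc [CompleteSpace E]
    (hsem : ∀ s : ℝ, 0 ≤ s → ∀ t : ℝ, 0 ≤ t → T (s + t) = (T s).comp (T t))
    {f : ℝ → E} {a t : ℝ} (hat : a ≤ t)
    (ha : IntegrableOn (fun s => T (a - s) (f s)) (Iic a))
    (ht : IntegrableOn (fun s => T (t - s) (f s)) (Iic t)) :
    causalConv T f t = T (t - a) (causalConv T f a) + ∫ s in Ioc a t, T (t - s) (f s) := by
  rw [causalConv, ← Iic_union_Ioc_eq_Iic hat, setIntegral_union (Iic_disjoint_Ioc le_rfl)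
    measurableSet_Ioc (ht.mono_set (Iic_subset_Iic.2 hat)) (ht.mono_set Ioc_subset_Iic_self)]
  congr 1
  calc ∫ s in Iic a, T (t - s) (f s)
      = ∫ s in Iic a, T (t - a) (T (a - s) (f s)) := by
        refine setIntegral_congr_fun measurableSet_Iic fun s hs => ?_
        rw [← ContinuousLinearMap.comp_apply, ← hsem _ (sub_nonneg.2 hat) _ (sub_nonneg.2 hs),
          sub_add_sub_cancel]
    _ = T (t - a) (causalConv T f a) := (T (t - a)).integral_comp_comm ha

end Convolution

theorem sqMeanAA_convolution_general {E : Type*} [NormedAddCommGroup E]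
    [NormedSpace ℝ E] [CompleteSpace E]
    (T : ℝ → E →L[ℝ] E) (K ω : ℝ) (hω : 0 < ω)
    (hsem : ∀ s : ℝ, 0 ≤ s → ∀ t : ℝ, 0 ≤ t → T (s + t) = (T s).comp (T t))
    (hTb : ∀ t : ℝ, 0 ≤ t → ‖T t‖ ≤ K * Real.exp (-ω * t))
    (hTc : Continuous fun p : ℝ × E => T p.1 p.2)
    (f : ℝ → E) (hf : SqMeanAA f)
    (hInt : ∀ t : ℝ, IntegrableOn (fun s => T (t - s) (f s)) (Iic t))
    (u : ℝ → E) (hu : ∀ t : ℝ, u t = ∫ s in Iic t, T (t - s) (f s)) :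
    SqMeanAA u ∧
      ∀ a t : ℝ, a ≤ t →
        u t = T (t - a) (u a) + ∫ s in Ioc a t, T (t - s) (f s) := by
  obtain rfl : u = causalConv T f := funext hu
  exact ⟨sqMeanAA_causalConv T hω hTb hTc hf,
    fun a t hat => causalConv_eq_add_integral_Ioc T hsem hat (hInt a) (hInt t)⟩

/-- For a square-mean almost automorphic `f` and an exponentially decaying
`C₀`-semigroup `T`, the convolution `u(t) = ∫_{−∞}^t T(t−s) f(s) ds` is
square-mean almost automorphic and satisfies the variation-of-constants
identity `u(t) = T(t−a) u(a) + ∫_a^t T(t−s) f(s) ds` for `a ≤ t`. -/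
theorem sqMeanAA_convolution {E : Type*} [NormedAddCommGroup E]
    [NormedSpace ℝ E] [CompleteSpace E]
    (T : ℝ → E →L[ℝ] E) (K ω : ℝ) (hK : 0 < K) (hω : 0 < ω)
    (hT0 : T 0 = ContinuousLinearMap.id ℝ E)
    (hsem : ∀ s : ℝ, 0 ≤ s → ∀ t : ℝ, 0 ≤ t → T (s + t) = (T s).comp (T t))
    (hTb : ∀ t : ℝ, 0 ≤ t → ‖T t‖ ≤ K * Real.exp (-ω * t))
    (hTc : Continuous fun p : ℝ × E => T p.1 p.2)
    (f : ℝ → E) (hf : SqMeanAA f)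
    (hInt : ∀ t : ℝ, IntegrableOn (fun s => T (t - s) (f s)) (Iic t))
    (u : ℝ → E) (hu : ∀ t : ℝ, u t = ∫ s in Iic t, T (t - s) (f s)) :
    SqMeanAA u ∧
      ∀ a t : ℝ, a ≤ t →
        u t = T (t - a) (u a) + ∫ s in Ioc a t, T (t - s) (f s) :=
  sqMeanAA_convolution_general T K ω hω hsem hTb hTc f hf hInt u hu
end
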